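/- arXiv:cmp-lg/9603002 — 3 statements merged into one kernel-verified Lean document; each statement's English description precedes it below -/
import Mathlib

section
/- For any context-free grammar G and any stack congruence ≡ on the LR(0) shift-reduce recognizer R(G), the unfolded recognizer R_≡ accepts exactly the same strings as R(G); in particular, R_≡ accepts exactly the language L(G). -/
/-!
Infrastructure for finite-state approximation of context-free grammars
(Pereira & Wright). We use Mathlib's `ContextFreeGrammar`.

A dotted rule `A → α · β` is represented as `(some A, α, β)`;
the auxiliary dotted rules `S' → · S` and `S' → S ·` are represented with
first component `none`.  States of the LR(0) characteristic machine `M(G)`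
are sets of dotted rules (the determinization by the subset construction);
the transition function `next` is total, with the empty set `∅` playing the
role of "undefined", so genuine transitions are those with nonempty target.
-/

namespace LRApprox

/-- Context-free grammar with nonterminals in an arbitrary universe, as in the
Mathlib of December 2024 (Mathlib now fixes `NT : Type`). -/
structure ContextFreeGrammar.{uN', uT'} (T : Type uT') where
  /-- Type of nonterminals. -/
  NT : Type uN'
  /-- Initial nonterminal. -/
  initial : NT
  /-- Rewrite rules. -/
  rules : Finset (ContextFreeRule T NT)

/-- One rewriting step of a context-free grammar. -/
def ContextFreeGrammar.Produces {T : Type*} (g : ContextFreeGrammar T)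
    (u v : List (Symbol T g.NT)) : Prop :=
  ∃ r ∈ g.rules, r.Rewrites u v

/-- Reflexive transitive closure of `Produces`. -/
abbrev ContextFreeGrammar.Derives {T : Type*} (g : ContextFreeGrammar T) :
    List (Symbol T g.NT) → List (Symbol T g.NT) → Prop :=
  Relation.ReflTransGen g.Produces

/-- `g` generates `s` from its initial nonterminal. -/
def ContextFreeGrammar.Generates {T : Type*} (g : ContextFreeGrammar T)
    (s : List (Symbol T g.NT)) : Prop :=
  g.Derives [Symbol.nonterminal g.initial] s

/-- The language generated by `g`. -/
def ContextFreeGrammar.language {T : Type*} (g : ContextFreeGrammar T) : Language T :=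
  { w : List T | g.Generates (List.map Symbol.terminal w) }

universe uN uT

variable {T : Type uT}

/-- A dotted rule `A → α · β`; `none` as first component stands for the
auxiliary start symbol `S'`. -/
abbrev DottedRule (g : ContextFreeGrammar.{uN} T) : Type _ :=
  Option g.NT × List (Symbol T g.NT) × List (Symbol T g.NT)

/-- A state of the characteristic machine `M(G)`: a set of dotted rules. -/
abbrev LRState (g : ContextFreeGrammar.{uN} T) : Type _ := Set (DottedRule g)

/-- Closure of a set of dotted rules: whenever `A → α · B β` is present and
`B → γ` is a rule, add `B → · γ`. -/
inductive Closure (g : ContextFreeGrammar.{uN} T) (R : Set (DottedRule g)) :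
    DottedRule g → Prop
  | base {d : DottedRule g} : d ∈ R → Closure g R d
  | step {A : Option g.NT} {α β : List (Symbol T g.NT)} {B : g.NT}
      (r : ContextFreeRule T g.NT) :
      Closure g R (A, α, Symbol.nonterminal B :: β) →
      r ∈ g.rules → r.input = B → Closure g R (some B, [], r.output)

/-- The transition function `δ` of `M(G)`: shift the dot over `X` and take the
closure.  The empty set plays the role of "undefined". -/
def next (g : ContextFreeGrammar.{uN} T) (s : LRState g) (X : Symbol T g.NT) : LRState g :=
  {d | Closure g {d' | ∃ A α β, (A, α, X :: β) ∈ s ∧ d' = (A, α ++ [X], β)} d}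

/-- The start state `s₀` of `M(G)`: the closure of `{S' → · S}`. -/
def start (g : ContextFreeGrammar.{uN} T) : LRState g :=
  {d | Closure g {(none, [], [Symbol.nonterminal g.initial])} d}

/-- The dotted rule `S' → S ·`. -/
def finalDR (g : ContextFreeGrammar.{uN} T) : DottedRule g :=
  (none, [Symbol.nonterminal g.initial], [])

/-- A state is final iff it contains `S' → S ·`. -/
def IsFinal (g : ContextFreeGrammar.{uN} T) (s : LRState g) : Prop := finalDR g ∈ s

/-- Iterated transition function, extended to strings of symbols. -/
def nextStar (g : ContextFreeGrammar.{uN} T) (s : LRState g)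
    (α : List (Symbol T g.NT)) : LRState g :=
  α.foldl (next g) s

/-- A stack of the shift-reduce recognizer: a sequence of (state, symbol) pairs. -/
abbrev Stack (g : ContextFreeGrammar.{uN} T) : Type _ :=
  List (LRState g × Symbol T g.NT)

/-- `Stacks g s σ` iff `σ = ⟨q₀,X₀⟩…⟨q_k,X_k⟩` with `q₀ = s₀`,
`q_i = δ(q_{i-1},X_{i-1})` and `s = δ(q_k,X_k)`; in addition `Stacks s₀`
contains the empty sequence. -/
inductive Stacks (g : ContextFreeGrammar.{uN} T) : LRState g → Stack g → Prop
  | nil : Stacks g (start g) []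
  | snoc {q : LRState g} {σ : Stack g} {X : Symbol T g.NT} :
      Stacks g q σ → next g q X ≠ ∅ → Stacks g (next g q X) (σ ++ [(q, X)])

/-- A configuration `⟨s, σ, w⟩` of the shift-reduce recognizer `R(G)`. -/
structure Cfg (g : ContextFreeGrammar.{uN} T) where
  state : LRState g
  stack : Stack g
  input : List T

/-- A shift move of `R(G)`. -/
inductive ShiftStep (g : ContextFreeGrammar.{uN} T) : Cfg g → Cfg g → Prop
  | shift {s : LRState g} {σ : Stack g} {x : T} {w : List T} :
      next g s (Symbol.terminal x) ≠ ∅ →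
      ShiftStep g ⟨s, σ, x :: w⟩
        ⟨next g s (Symbol.terminal x), σ ++ [(s, Symbol.terminal x)], w⟩

/-- A reduce move of `R(G)`. -/
inductive ReduceStep (g : ContextFreeGrammar.{uN} T) : Cfg g → Cfg g → Prop
  | empty {s : LRState g} {σ : Stack g} {w : List T} {A : g.NT} :
      (some A, ([] : List (Symbol T g.NT)), ([] : List (Symbol T g.NT))) ∈ s →
      next g s (Symbol.nonterminal A) ≠ ∅ →
      ReduceStep g ⟨s, σ, w⟩
        ⟨next g s (Symbol.nonterminal A), σ ++ [(s, Symbol.nonterminal A)], w⟩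
  | pop {s : LRState g} {σ τ : Stack g} {w : List T} {A : g.NT}
      {s₁ : LRState g} {X₁ : Symbol T g.NT} :
      (some A, ((s₁, X₁) :: τ).map Prod.snd, ([] : List (Symbol T g.NT))) ∈ s →
      next g s₁ (Symbol.nonterminal A) ≠ ∅ →
      ReduceStep g ⟨s, σ ++ (s₁, X₁) :: τ, w⟩
        ⟨next g s₁ (Symbol.nonterminal A), σ ++ [(s₁, Symbol.nonterminal A)], w⟩

/-- A move of the shift-reduce recognizer `R(G)`. -/
def Step (g : ContextFreeGrammar.{uN} T) (c c' : Cfg g) : Prop :=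
  ShiftStep g c c' ∨ ReduceStep g c c'

/-- `R(G)` accepts `w`: some sequence of moves leads from the initial
configuration `⟨s₀, ε, w⟩` to a final configuration `⟨s, ⟨s₀,S⟩, ε⟩`, `s ∈ F`. -/
def RAccepts (g : ContextFreeGrammar.{uN} T) (w : List T) : Prop :=
  ∃ s : LRState g, IsFinal g s ∧
    Relation.ReflTransGen (Step g) ⟨start g, [], w⟩
      ⟨s, [(start g, Symbol.nonterminal g.initial)], []⟩

/-- A stack congruence on `R(G)`: a family of equivalence relations on
`Stacks(s)`, compatible with pushing. -/
def IsStackCongruence (g : ContextFreeGrammar.{uN} T)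
    (E : LRState g → Stack g → Stack g → Prop) : Prop :=
  (∀ s σ σ', E s σ σ' → Stacks g s σ ∧ Stacks g s σ') ∧
  (∀ s σ, Stacks g s σ → E s σ σ) ∧
  (∀ s σ σ', E s σ σ' → E s σ' σ) ∧
  (∀ s σ₁ σ₂ σ₃, E s σ₁ σ₂ → E s σ₂ σ₃ → E s σ₁ σ₃) ∧
  (∀ s X σ σ', next g s X ≠ ∅ → E s σ σ' →
    E (next g s X) (σ ++ [(s, X)]) (σ' ++ [(s, X)]))

/-- A state of the unfolded recognizer `R_≡`: a state of `M(G)` together with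
an equivalence class of stacks (represented as a set of stacks). -/
abbrev UState (g : ContextFreeGrammar.{uN} T) : Type _ := LRState g × Set (Stack g)

/-- Transition function `δ_≡` of the unfolded recognizer:
`δ_≡(⟨s,[σ]⟩, X) = ⟨δ(s,X), [σ⟨s,X⟩]⟩`. -/
def uNext (g : ContextFreeGrammar.{uN} T) (E : LRState g → Stack g → Stack g → Prop)
    (p : UState g) (X : Symbol T g.NT) : UState g :=
  (next g p.1 X,
   {τ | Stacks g (next g p.1 X) τ ∧ ∃ σ ∈ p.2, E (next g p.1 X) τ (σ ++ [(p.1, X)])})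

/-- Start state `⟨s₀, [ε]⟩` of the unfolded recognizer. -/
def uStart (g : ContextFreeGrammar.{uN} T)
    (E : LRState g → Stack g → Stack g → Prop) : UState g :=
  (start g, {τ | Stacks g (start g) τ ∧ E (start g) τ []})

/-- Genuine states of the unfolded recognizer: pairs `⟨s, [σ]_s⟩` with
`σ ∈ Stacks(s)`. -/
def IsUState (g : ContextFreeGrammar.{uN} T)
    (E : LRState g → Stack g → Stack g → Prop) (p : UState g) : Prop :=
  ∃ σ, Stacks g p.1 σ ∧ p.2 = {τ | Stacks g p.1 τ ∧ E p.1 τ σ}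

/-- Iterated `δ_≡`, extended to strings of symbols. -/
def uNextStar (g : ContextFreeGrammar.{uN} T)
    (E : LRState g → Stack g → Stack g → Prop)
    (p : UState g) (α : List (Symbol T g.NT)) : UState g :=
  α.foldl (uNext g E) p

/-- A configuration of the unfolded recognizer `R_≡`. -/
structure UCfg (g : ContextFreeGrammar.{uN} T) where
  state : UState g
  stack : List (UState g × Symbol T g.NT)
  input : List T

/-- A shift move of the unfolded recognizer. -/
inductive UShiftStep (g : ContextFreeGrammar.{uN} T)
    (E : LRState g → Stack g → Stack g → Prop) : UCfg g → UCfg g → Prop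
  | shift {p : UState g} {σ : List (UState g × Symbol T g.NT)} {x : T} {w : List T} :
      next g p.1 (Symbol.terminal x) ≠ ∅ →
      UShiftStep g E ⟨p, σ, x :: w⟩
        ⟨uNext g E p (Symbol.terminal x), σ ++ [(p, Symbol.terminal x)], w⟩

/-- A reduce move of the unfolded recognizer. -/
inductive UReduceStep (g : ContextFreeGrammar.{uN} T)
    (E : LRState g → Stack g → Stack g → Prop) : UCfg g → UCfg g → Prop
  | empty {p : UState g} {σ : List (UState g × Symbol T g.NT)} {w : List T} {A : g.NT} :
      (some A, ([] : List (Symbol T g.NT)), ([] : List (Symbol T g.NT))) ∈ p.1 →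
      next g p.1 (Symbol.nonterminal A) ≠ ∅ →
      UReduceStep g E ⟨p, σ, w⟩
        ⟨uNext g E p (Symbol.nonterminal A), σ ++ [(p, Symbol.nonterminal A)], w⟩
  | pop {p : UState g} {σ τ : List (UState g × Symbol T g.NT)} {w : List T} {A : g.NT}
      {p₁ : UState g} {X₁ : Symbol T g.NT} :
      (some A, ((p₁, X₁) :: τ).map Prod.snd, ([] : List (Symbol T g.NT))) ∈ p.1 →
      next g p₁.1 (Symbol.nonterminal A) ≠ ∅ →
      UReduceStep g E ⟨p, σ ++ (p₁, X₁) :: τ, w⟩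
        ⟨uNext g E p₁ (Symbol.nonterminal A), σ ++ [(p₁, Symbol.nonterminal A)], w⟩

/-- A move of the unfolded recognizer `R_≡`. -/
def UStep (g : ContextFreeGrammar.{uN} T)
    (E : LRState g → Stack g → Stack g → Prop) (c c' : UCfg g) : Prop :=
  UShiftStep g E c c' ∨ UReduceStep g E c c'

/-- The unfolded recognizer `R_≡` accepts `w`. -/
def UAccepts (g : ContextFreeGrammar.{uN} T)
    (E : LRState g → Stack g → Stack g → Prop) (w : List T) : Prop :=
  ∃ p : UState g, IsFinal g p.1 ∧
    Relation.ReflTransGen (UStep g E) ⟨uStart g E, [], w⟩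
      ⟨p, [(uStart g E, Symbol.nonterminal g.initial)], []⟩

/-- `Pop(p)`: the unfolded states reachable from `p` by a reduction. -/
def PopSet (g : ContextFreeGrammar.{uN} T)
    (E : LRState g → Stack g → Stack g → Prop) (p : UState g) : Set (UState g) :=
  {p' | ∃ (A : g.NT) (α : List (Symbol T g.NT)) (p'' : UState g),
    IsUState g E p'' ∧
    (some A, α, ([] : List (Symbol T g.NT))) ∈ p.1 ∧
    (some A, ([] : List (Symbol T g.NT)), α) ∈ p''.1 ∧
    uNextStar g E p'' α = p ∧
    next g p''.1 (Symbol.nonterminal A) ≠ ∅ ∧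
    uNext g E p'' (Symbol.nonterminal A) = p'}

/-- Paths in the flattening `F_≡` of the unfolded recognizer: terminal
transitions follow `δ_≡` and reductions become ε-transitions. -/
inductive FPath (g : ContextFreeGrammar.{uN} T)
    (E : LRState g → Stack g → Stack g → Prop) : UState g → List T → UState g → Prop
  | refl (p : UState g) : FPath g E p [] p
  | shift {p : UState g} {x : T} {w : List T} {q : UState g} :
      next g p.1 (Symbol.terminal x) ≠ ∅ →
      FPath g E (uNext g E p (Symbol.terminal x)) w q → FPath g E p (x :: w) q
  | eps {p p' : UState g} {w : List T} {q : UState g} :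
      p' ∈ PopSet g E p → FPath g E p' w q → FPath g E p w q

/-- The flattening `F_≡` accepts `w`. -/
def FAccepts (g : ContextFreeGrammar.{uN} T)
    (E : LRState g → Stack g → Stack g → Prop) (w : List T) : Prop :=
  ∃ q : UState g, IsFinal g q.1 ∧ FPath g E (uStart g E) w q

/-- A stack `⟨s₁,X₁⟩…⟨s_k,X_k⟩` is a loop if `δ(s_k,X_k) = s₁`. -/
def IsLoop (g : ContextFreeGrammar.{uN} T) (τ : Stack g) : Prop :=
  ∃ p q : LRState g × Symbol T g.NT,
    τ.head? = some p ∧ τ.getLast? = some q ∧ next g q.1 q.2 = p.1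

/-- A loop is minimal if no proper prefix of it is a loop. -/
def IsMinimalLoop (g : ContextFreeGrammar.{uN} T) (τ : Stack g) : Prop :=
  IsLoop g τ ∧ ∀ τ' : Stack g, τ' <+: τ → τ' ≠ τ → ¬ IsLoop g τ'

/-- A stack is collapsible if it contains a loop as a contiguous segment. -/
def Collapsible (g : ContextFreeGrammar.{uN} T) (σ : Stack g) : Prop :=
  ∃ ρ τ υ : Stack g, σ = ρ ++ τ ++ υ ∧ IsLoop g τ

/-- `σ` immediately collapses to `σ'`: remove the earliest minimal loop. -/
def ImmediatelyCollapses (g : ContextFreeGrammar.{uN} T) (σ σ' : Stack g) : Prop :=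
  ∃ ρ τ υ : Stack g, σ = ρ ++ τ ++ υ ∧ σ' = ρ ++ υ ∧ IsMinimalLoop g τ ∧
    ¬ ∃ ρ' τ' υ' : Stack g, σ = ρ' ++ τ' ++ υ' ∧ ρ' <+: ρ ∧ ρ' ≠ ρ ∧ IsLoop g τ'

/-- `σ` collapses to `σ'` by finitely many immediate collapses. -/
def Collapses (g : ContextFreeGrammar.{uN} T) : Stack g → Stack g → Prop :=
  Relation.ReflTransGen (ImmediatelyCollapses g)

/-- Two stacks are collapsing-equivalent if they collapse to the same
uncollapsible stack. -/
def CollEquiv (g : ContextFreeGrammar.{uN} T) (σ σ' : Stack g) : Prop :=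
  ∃ τ : Stack g, ¬ Collapsible g τ ∧ Collapses g σ τ ∧ Collapses g σ' τ

/-- The collapsing congruence: the restriction of collapsing equivalence to
the sets `Stacks(s)`. -/
def CollCong (g : ContextFreeGrammar.{uN} T) (s : LRState g) (σ σ' : Stack g) : Prop :=
  Stacks g s σ ∧ Stacks g s σ' ∧ CollEquiv g σ σ'

/-- A CFG is left-linear if every rule has the form `A → Bβ` or `A → β`
with `β` a string of terminals. -/
def LeftLinear (g : ContextFreeGrammar.{uN} T) : Prop :=
  ∀ r ∈ g.rules, (∃ β : List T, r.output = β.map Symbol.terminal) ∨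
    (∃ (B : g.NT) (β : List T), r.output = Symbol.nonterminal B :: β.map Symbol.terminal)

/-- A CFG is right-linear if every rule has the form `A → βB` or `A → β`
with `β` a string of terminals. -/
def RightLinear (g : ContextFreeGrammar.{uN} T) : Prop :=
  ∀ r ∈ g.rules, (∃ β : List T, r.output = β.map Symbol.terminal) ∨
    (∃ (B : g.NT) (β : List T), r.output = β.map Symbol.terminal ++ [Symbol.nonterminal B])

/-- Reachable (genuine) states of `M(G)`. -/
def ReachableState (g : ContextFreeGrammar.{uN} T) (s : LRState g) : Prop :=
  s ≠ ∅ ∧ ∃ α : List (Symbol T g.NT), nextStar g (start g) α = s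


/-
Forgetting the stack classes maps runs of `R_≡` to runs of `R(G)`. Conversely, since `≡` is a
congruence, `δ_≡(⟨s, [σ]_s⟩, X) = ⟨δ(s, X), [σ⟨s, X⟩]⟩` for every `σ ∈ Stacks(s)`, so decorating
each entry of a stack of `R(G)` with the class of the stack below it turns runs of `R(G)` into runs
of `R_≡`. That `R(G)` recognizes `L(G)` is the correctness of LR(0) shift-reduce recognition: along
a run the stack symbols derive the input read so far, and a parse forest of the input drives an
accepting run.
-/

namespace ContextFreeGrammar

variable {g : ContextFreeGrammar.{uN} T}

lemma Produces.append_right {v w : List (Symbol T g.NT)} (hvw : g.Produces v w)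
    (p : List (Symbol T g.NT)) : g.Produces (v ++ p) (w ++ p) :=
  let ⟨r, hr, hrw⟩ := hvw
  ⟨r, hr, hrw.append_right p⟩

lemma Derives.append_right {v w : List (Symbol T g.NT)} (hvw : g.Derives v w)
    (p : List (Symbol T g.NT)) : g.Derives (v ++ p) (w ++ p) := by
  induction hvw with
  | refl => exact .refl
  | tail _ hlast ih => exact ih.tail (hlast.append_right p)

lemma produces_append_input {r : ContextFreeRule T g.NT} (hr : r ∈ g.rules)
    (p : List (Symbol T g.NT)) :
    g.Produces (p ++ [Symbol.nonterminal r.input]) (p ++ r.output) :=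
  ⟨r, hr, by simpa using r.rewrites_of_exists_parts p []⟩

/-- `g.DerivesWord γ w`: a parse forest with frontier `w` for the symbols `γ`. -/
inductive DerivesWord (g : ContextFreeGrammar.{uN} T) : List (Symbol T g.NT) → List T → Prop
  | nil : g.DerivesWord [] []
  | terminal {a : T} {γ : List (Symbol T g.NT)} {w : List T} :
      g.DerivesWord γ w → g.DerivesWord (Symbol.terminal a :: γ) (a :: w)
  | nonterminal {r : ContextFreeRule T g.NT} {γ : List (Symbol T g.NT)} {u w : List T} :
      r ∈ g.rules → g.DerivesWord r.output u → g.DerivesWord γ w →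
      g.DerivesWord (Symbol.nonterminal r.input :: γ) (u ++ w)

namespace DerivesWord

lemma append {α β : List (Symbol T g.NT)} {u v : List T} (hα : g.DerivesWord α u)
    (hβ : g.DerivesWord β v) : g.DerivesWord (α ++ β) (u ++ v) := by
  induction hα with
  | nil => exact hβ
  | terminal _ ih => exact ih.terminal
  | nonterminal hr hout _ _ ih =>
    rw [List.append_assoc]
    exact nonterminal hr hout ih

lemma of_append {α β : List (Symbol T g.NT)} {w : List T} (h : g.DerivesWord (α ++ β) w) :
    ∃ u v, w = u ++ v ∧ g.DerivesWord α u ∧ g.DerivesWord β v := by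
  induction α generalizing w with
  | nil => exact ⟨[], w, rfl, nil, h⟩
  | cons X α ih =>
    rw [List.cons_append] at h
    cases h with
    | terminal h =>
      obtain ⟨u, v, rfl, hu, hv⟩ := ih h
      exact ⟨_ :: u, v, rfl, hu.terminal, hv⟩
    | nonterminal hr hout h =>
      obtain ⟨u, v, rfl, hu, hv⟩ := ih h
      exact ⟨_ ++ u, v, (List.append_assoc ..).symm, nonterminal hr hout hu, hv⟩

lemma map_terminal (w : List T) : g.DerivesWord (w.map Symbol.terminal) w := by
  induction w with
  | nil => exact nil
  | cons a w ih => exact ih.terminal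

lemma of_produces {u v : List (Symbol T g.NT)} {w : List T} (huv : g.Produces u v)
    (hv : g.DerivesWord v w) : g.DerivesWord u w := by
  obtain ⟨r, hr, hrw⟩ := huv
  obtain ⟨p, q, rfl, rfl⟩ := hrw.exists_parts
  obtain ⟨wp, w', rfl, hp, h'⟩ := of_append (α := p) (by simpa only [List.append_assoc] using hv)
  obtain ⟨wr, wq, rfl, hout, hq⟩ := of_append h'
  simpa only [List.append_assoc, List.singleton_append] using hp.append (nonterminal hr hout hq)

end DerivesWord

lemma Derives.derivesWord {γ : List (Symbol T g.NT)} {w : List T}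
    (h : g.Derives γ (w.map Symbol.terminal)) : g.DerivesWord γ w := by
  induction h using Relation.ReflTransGen.head_induction_on with
  | refl => exact .map_terminal w
  | head huv _ ih => exact ih.of_produces huv

end ContextFreeGrammar

variable {g : ContextFreeGrammar.{uN} T}

lemma mem_next_of_mem {s : LRState g} {A : Option g.NT} {α β : List (Symbol T g.NT)}
    {X : Symbol T g.NT} (h : (A, α, X :: β) ∈ s) : (A, α ++ [X], β) ∈ next g s X :=
  Closure.base ⟨A, α, β, h, rfl⟩

lemma next_ne_empty_of_mem {s : LRState g} {A : Option g.NT} {α β : List (Symbol T g.NT)}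
    {X : Symbol T g.NT} (h : (A, α, X :: β) ∈ s) : next g s X ≠ ∅ :=
  Set.nonempty_iff_ne_empty.mp ⟨_, mem_next_of_mem h⟩

lemma mem_nextStar_of_mem {γ : List (Symbol T g.NT)} {s : LRState g} {A : Option g.NT}
    {α β : List (Symbol T g.NT)} (h : (A, α, γ ++ β) ∈ s) : (A, α ++ γ, β) ∈ nextStar g s γ := by
  induction γ generalizing s α with
  | nil => simpa [nextStar] using h
  | cons X γ ih => simpa [nextStar] using ih (mem_next_of_mem h)

lemma isFinal_next_start : IsFinal g (next g (start g) (Symbol.nonterminal g.initial)) :=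
  mem_next_of_mem (s := start g) (α := []) (Closure.base rfl)

def IsPredictionClosed (g : ContextFreeGrammar.{uN} T) (s : LRState g) : Prop :=
  ∀ (A : Option g.NT) (α β : List (Symbol T g.NT)) (r : ContextFreeRule T g.NT),
    (A, α, Symbol.nonterminal r.input :: β) ∈ s → r ∈ g.rules → (some r.input, [], r.output) ∈ s

lemma isPredictionClosed_closure (R : Set (DottedRule g)) :
    IsPredictionClosed g {d | Closure g R d} :=
  fun _ _ _ r h hr => Closure.step r h hr rfl

def IsSound (g : ContextFreeGrammar.{uN} T) (s : LRState g) : Prop :=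
  ∀ (A : g.NT) (μ ν : List (Symbol T g.NT)), (some A, μ, ν) ∈ s →
    ∃ r ∈ g.rules, r.input = A ∧ r.output = μ ++ ν

lemma isSound_closure {R : Set (DottedRule g)} (hR : IsSound g R) :
    IsSound g {d | Closure g R d} := by
  intro A μ ν h
  generalize hd : ((some A, μ, ν) : DottedRule g) = d at h
  induction h generalizing A μ ν with
  | base hmem => subst hd; exact hR A μ ν hmem
  | step r _ hr hi =>
    simp only [Prod.mk.injEq, Option.some_inj] at hd
    obtain ⟨rfl, rfl, rfl⟩ := hd
    exact ⟨r, hr, hi, rfl⟩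

lemma isSound_start : IsSound g (start g) :=
  isSound_closure (by simp [IsSound])

lemma IsSound.next {s : LRState g} (hs : IsSound g s) (X : Symbol T g.NT) :
    IsSound g (next g s X) := by
  refine isSound_closure ?_
  rintro A μ ν ⟨A', α, β, hmem, hd⟩
  simp only [Prod.mk.injEq] at hd
  obtain ⟨rfl, rfl, rfl⟩ := hd
  obtain ⟨r, hr, hi, ho⟩ := hs _ _ _ hmem
  exact ⟨r, hr, hi, by simp [ho]⟩

lemma Stacks.isSound {s : LRState g} {σ : Stack g} (h : Stacks g s σ) : IsSound g s := by
  induction h with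
  | nil => exact isSound_start
  | snoc _ _ ih => exact ih.next _

lemma Stacks.of_append_cons {τ : Stack g} {s q : LRState g} {σ : Stack g} {X : Symbol T g.NT}
    (h : Stacks g s (σ ++ (q, X) :: τ)) : Stacks g q σ := by
  induction τ using List.reverseRecOn generalizing s with
  | nil =>
    generalize hρ : σ ++ [(q, X)] = ρ at h
    cases h with
    | nil => simp at hρ
    | snoc h _ =>
      obtain ⟨rfl, hqX⟩ := List.append_inj' hρ rfl
      cases hqX
      exact h
  | append_singleton τ e ih =>
    generalize hρ : σ ++ (q, X) :: (τ ++ [e]) = ρ at h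
    cases h with
    | nil => simp at hρ
    | snoc h _ =>
      rw [← List.cons_append, ← List.append_assoc] at hρ
      obtain ⟨rfl, -⟩ := List.append_inj' hρ rfl
      exact ih h

lemma Step.stacks {c c' : Cfg g} (h : Step g c c') (hc : Stacks g c.state c.stack) :
    Stacks g c'.state c'.stack := by
  rcases h with @⟨_, _, _, _, hne⟩ | ⟨_, hne⟩ | ⟨_, hne⟩
  · exact hc.snoc hne
  · exact hc.snoc hne
  · exact hc.of_append_cons.snoc hne

lemma Stacks.of_reflTransGen_step {c c' : Cfg g} (h : Relation.ReflTransGen (Step g) c c')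
    (hc : Stacks g c.state c.stack) : Stacks g c'.state c'.stack := by
  induction h with
  | refl => exact hc
  | tail _ hstep ih => exact hstep.stacks ih

lemma IsSound.derives_reduce {s : LRState g} (hs : IsSound g s) {A : g.NT}
    {μ : List (Symbol T g.NT)} (hmem : (some A, μ, []) ∈ s) {ρ : List (Symbol T g.NT)}
    {u : List T} (hu : g.Derives (ρ ++ μ) (u.map Symbol.terminal)) :
    g.Derives (ρ ++ [Symbol.nonterminal A]) (u.map Symbol.terminal) := by
  obtain ⟨r, hr, rfl, hout⟩ := hs _ _ _ hmem
  rw [List.append_nil] at hout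
  exact .head (ContextFreeGrammar.produces_append_input hr ρ) (hout ▸ hu)

lemma Step.derives_consumed {c c' : Cfg g} (h : Step g c c') (hc : Stacks g c.state c.stack)
    {w u : List T} (hw : w = u ++ c.input)
    (hu : g.Derives (c.stack.map Prod.snd) (u.map Symbol.terminal)) :
    ∃ u', w = u' ++ c'.input ∧ g.Derives (c'.stack.map Prod.snd) (u'.map Symbol.terminal) := by
  rcases h with @⟨s, σ, x, v, -⟩ | ⟨hmem, -⟩ | ⟨hmem, -⟩
  · refine ⟨u ++ [x], by simpa using hw, ?_⟩
    simpa using hu.append_right [Symbol.terminal x]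
  · exact ⟨u, hw, by simpa using hc.isSound.derives_reduce hmem (by simpa using hu)⟩
  · exact ⟨u, hw, by simpa using hc.isSound.derives_reduce hmem (by simpa using hu)⟩

lemma mem_language_of_rAccepts {w : List T} (h : RAccepts g w) : w ∈ g.language := by
  obtain ⟨s, -, hrun⟩ := h
  suffices ∀ c, Relation.ReflTransGen (Step g) ⟨start g, [], w⟩ c →
      ∃ u, w = u ++ c.input ∧ g.Derives (c.stack.map Prod.snd) (u.map Symbol.terminal) by
    obtain ⟨u, hw, hu⟩ := this _ hrun
    rw [List.append_nil] at hw
    exact hw ▸ hu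
  intro c hc
  induction hc with
  | refl => exact ⟨[], rfl, .refl⟩
  | tail hrun hstep ih =>
    obtain ⟨u, hw, hu⟩ := ih
    exact hstep.derives_consumed (Stacks.nil.of_reflTransGen_step hrun) hw hu

def pathStack (g : ContextFreeGrammar.{uN} T) : LRState g → List (Symbol T g.NT) → Stack g
  | _, [] => []
  | s, X :: γ => (s, X) :: pathStack g (next g s X) γ

lemma pathStack_map_snd (γ : List (Symbol T g.NT)) (s : LRState g) :
    (pathStack g s γ).map Prod.snd = γ := by
  induction γ generalizing s with
  | nil => rfl
  | cons X γ ih => simp [pathStack, ih]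

lemma reduceStep_pathStack {s : LRState g} {A : g.NT} {γ : List (Symbol T g.NT)}
    (hmem : (some A, γ, []) ∈ nextStar g s γ) (hne : next g s (Symbol.nonterminal A) ≠ ∅)
    (σ : Stack g) (w : List T) :
    ReduceStep g ⟨nextStar g s γ, σ ++ pathStack g s γ, w⟩
      ⟨next g s (Symbol.nonterminal A), σ ++ [(s, Symbol.nonterminal A)], w⟩ := by
  cases γ with
  | nil => simpa [nextStar, pathStack] using ReduceStep.empty (σ := σ) (w := w) hmem hne
  | cons X γ => exact .pop (by rwa [List.map_cons, pathStack_map_snd]) hne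

/-- Completeness of `R(G)`. -/
lemma ContextFreeGrammar.DerivesWord.run {γ : List (Symbol T g.NT)} {w : List T}
    (h : g.DerivesWord γ w) {s : LRState g} (hs : IsPredictionClosed g s) {A : Option g.NT}
    {β δ : List (Symbol T g.NT)} (hmem : (A, β, γ ++ δ) ∈ s) (σ : Stack g) (v : List T) :
    Relation.ReflTransGen (Step g) ⟨s, σ, w ++ v⟩
      ⟨nextStar g s γ, σ ++ pathStack g s γ, v⟩ := by
  induction h generalizing s A β δ σ v with
  | nil => simpa [nextStar, pathStack] using .refl
  | @terminal a _ _ _ ih =>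
    have hrun := ih (isPredictionClosed_closure _) (mem_next_of_mem hmem)
      (σ ++ [(s, Symbol.terminal a)]) v
    rw [List.append_assoc, List.singleton_append] at hrun
    exact .head (Or.inl (.shift (next_ne_empty_of_mem hmem))) hrun
  | @nonterminal r γ u w hr _ _ ih_out ih_rest =>
    have hpredict : (some r.input, [], r.output ++ []) ∈ s := by
      simpa using hs _ _ _ r hmem hr
    have hcomplete : (some r.input, r.output, []) ∈ nextStar g s r.output := by
      simpa using mem_nextStar_of_mem hpredict
    have hrest := ih_rest (isPredictionClosed_closure _) (mem_next_of_mem hmem)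
      (σ ++ [(s, Symbol.nonterminal r.input)]) v
    rw [List.append_assoc, List.singleton_append] at hrest
    rw [List.append_assoc]
    exact (ih_out hs hpredict σ (w ++ v)).trans <|
      .head (Or.inr (reduceStep_pathStack hcomplete (next_ne_empty_of_mem hmem) σ _)) hrest

lemma rAccepts_of_mem_language {w : List T} (hw : w ∈ g.language) : RAccepts g w :=
  ⟨_, isFinal_next_start, by
    simpa [nextStar, pathStack] using (ContextFreeGrammar.Derives.derivesWord hw).run
      (isPredictionClosed_closure _) (s := start g) (β := []) (δ := []) (Closure.base rfl) [] []⟩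

lemma rAccepts_iff_mem_language {w : List T} : RAccepts g w ↔ w ∈ g.language :=
  ⟨mem_language_of_rAccepts, rAccepts_of_mem_language⟩

variable {E : LRState g → Stack g → Stack g → Prop}

def UCfg.toCfg (c : UCfg g) : Cfg g :=
  ⟨c.state.1, c.stack.map (fun p => (p.1.1, p.2)), c.input⟩

lemma UStep.toCfg {c c' : UCfg g} (h : UStep g E c c') : Step g c.toCfg c'.toCfg := by
  rcases h with @⟨_, _, _, _, hne⟩ | ⟨hmem, hne⟩ | ⟨hmem, hne⟩
  · left
    simpa [UCfg.toCfg, uNext] using ShiftStep.shift hne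
  · right
    simpa [UCfg.toCfg, uNext] using ReduceStep.empty hmem hne
  · right
    simpa [UCfg.toCfg, uNext] using
      ReduceStep.pop (by simpa [Function.comp_def] using hmem) hne

lemma rAccepts_of_uAccepts {w : List T} (h : UAccepts g E w) : RAccepts g w := by
  obtain ⟨p, hfinal, hrun⟩ := h
  exact ⟨p.1, hfinal, hrun.lift UCfg.toCfg fun _ _ ↦ UStep.toCfg⟩

/-- The class `[σ]_s`, represented as in `uNext`. -/
def stackClass (g : ContextFreeGrammar.{uN} T) (E : LRState g → Stack g → Stack g → Prop)
    (s : LRState g) (σ : Stack g) : Set (Stack g) :=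
  {τ | Stacks g s τ ∧ E s τ σ}

lemma uNext_stackClass (hE : IsStackCongruence g E) {s : LRState g} {σ : Stack g}
    {X : Symbol T g.NT} (hσ : Stacks g s σ) (hne : next g s X ≠ ∅) :
    uNext g E (s, stackClass g E s σ) X =
      (next g s X, stackClass g E (next g s X) (σ ++ [(s, X)])) := by
  obtain ⟨-, hrefl, -, htrans, hpush⟩ := hE
  refine Prod.ext rfl (Set.ext fun τ ↦ ⟨?_, ?_⟩)
  · rintro ⟨hτ, ρ, ⟨-, hρσ⟩, hτρ⟩
    exact ⟨hτ, htrans _ _ _ _ hτρ (hpush _ _ _ _ hne hρσ)⟩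
  · rintro ⟨hτ, hτσ⟩
    exact ⟨hτ, σ, ⟨hσ, hrefl _ _ hσ⟩, hτσ⟩

/-- Decorates every entry of a stack with the class of the stack below it; `pre` is the part of
the stack below the decorated segment. -/
def liftStack (g : ContextFreeGrammar.{uN} T) (E : LRState g → Stack g → Stack g → Prop) :
    Stack g → Stack g → List (UState g × Symbol T g.NT)
  | _, [] => []
  | pre, (s, X) :: σ => ((s, stackClass g E s pre), X) :: liftStack g E (pre ++ [(s, X)]) σ

lemma liftStack_append (pre σ τ : Stack g) :
    liftStack g E pre (σ ++ τ) = liftStack g E pre σ ++ liftStack g E (pre ++ σ) τ := by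
  induction σ generalizing pre with
  | nil => simp [liftStack]
  | cons e σ ih => simp [liftStack, ih]

lemma liftStack_map_snd (pre σ : Stack g) :
    (liftStack g E pre σ).map Prod.snd = σ.map Prod.snd := by
  induction σ generalizing pre with
  | nil => rfl
  | cons e σ ih => simp [liftStack, ih]

def Cfg.lift (g : ContextFreeGrammar.{uN} T) (E : LRState g → Stack g → Stack g → Prop)
    (c : Cfg g) : UCfg g :=
  ⟨(c.state, stackClass g E c.state c.stack), liftStack g E [] c.stack, c.input⟩

lemma Cfg.lift_push (hE : IsStackCongruence g E) {s : LRState g} {σ : Stack g}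
    {X : Symbol T g.NT} (hσ : Stacks g s σ) (hne : next g s X ≠ ∅) (w : List T) :
    Cfg.lift g E ⟨next g s X, σ ++ [(s, X)], w⟩ =
      ⟨uNext g E (s, stackClass g E s σ) X,
        liftStack g E [] σ ++ [((s, stackClass g E s σ), X)], w⟩ := by
  rw [uNext_stackClass hE hσ hne]
  simp [Cfg.lift, liftStack_append, liftStack]

lemma Step.lift (hE : IsStackCongruence g E) {c c' : Cfg g} (h : Step g c c')
    (hc : Stacks g c.state c.stack) : UStep g E (c.lift g E) (c'.lift g E) := by
  rcases h with @⟨_, _, _, _, hne⟩ | ⟨hmem, hne⟩ | @⟨s, σ, τ, w, A, s₁, X₁, hmem, hne⟩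
  · rw [Cfg.lift_push hE hc hne]
    exact Or.inl (.shift hne)
  · rw [Cfg.lift_push hE hc hne]
    exact Or.inr (.empty hmem hne)
  · rw [Cfg.lift_push hE hc.of_append_cons hne]
    have hstack : liftStack g E [] (σ ++ (s₁, X₁) :: τ) = liftStack g E [] σ ++
        ((s₁, stackClass g E s₁ σ), X₁) :: liftStack g E (σ ++ [(s₁, X₁)]) τ := by
      simp [liftStack_append, liftStack]
    simp only [Cfg.lift, hstack]
    exact Or.inr (.pop (by simpa [liftStack_map_snd] using hmem) hne)

lemma uAccepts_of_rAccepts (hE : IsStackCongruence g E) {w : List T} (h : RAccepts g w) :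
    UAccepts g E w := by
  obtain ⟨s, hfinal, hrun⟩ := h
  refine ⟨(s, stackClass g E s [(start g, Symbol.nonterminal g.initial)]), hfinal, ?_⟩
  have hlift : ∀ c, Relation.ReflTransGen (Step g) ⟨start g, [], w⟩ c →
      Relation.ReflTransGen (UStep g E) ⟨uStart g E, [], w⟩ (c.lift g E) := by
    intro c hc
    induction hc with
    | refl => exact .refl
    | tail hrun hstep ih => exact ih.tail (hstep.lift hE (Stacks.nil.of_reflTransGen_step hrun))
  exact hlift _ hrun

end LRApprox

open LRApprox

/-- For any CFG `G` and any stack congruence `≡` on the LR(0)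
shift-reduce recognizer `R(G)`, the unfolded recognizer `R_≡` accepts exactly
the same strings as `R(G)`; in particular, `R_≡` accepts exactly `L(G)`. -/
theorem unfolded_recognizer_equivalent {T : Type*} (g : LRApprox.ContextFreeGrammar T)
    (E : LRState g → Stack g → Stack g → Prop)
    (hE : IsStackCongruence g E) :
    (∀ w : List T, UAccepts g E w ↔ RAccepts g w) ∧
    (∀ w : List T, UAccepts g E w ↔ w ∈ g.language) := by
  have hUR : ∀ w : List T, UAccepts g E w ↔ RAccepts g w :=
    fun _ ↦ ⟨rAccepts_of_uAccepts, uAccepts_of_rAccepts hE⟩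
  exact ⟨hUR, fun w ↦ (hUR w).trans rAccepts_iff_mem_language⟩
end

section
/- Every collapsible stack σ immediately collapses to a unique stack C(σ); that is, there is exactly one stack σ' such that σ immediately collapses to σ'. -/
open LRApprox

/-!
The immediate collapse of `σ = ρ τ υ` is pinned down by two shortest-prefix choices: `ρ` is the
shortest prefix of `σ` right after which a loop starts, and `τ` is the shortest loop starting
there. A predicate that holds of some prefix of a list holds of a shortest one, and two
prefix-minimal prefixes of the same list coincide because the prefixes of a list form a chain.
-/

section PrefixMinimal

variable {α : Type*} {P : List α → Prop}

variable (P) in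
def PrefixMinimal (τ : List α) : Prop :=
  P τ ∧ ∀ τ', τ' <+: τ → τ' ≠ τ → ¬ P τ'

theorem PrefixMinimal.eq_of_prefix {a b l : List α} (ha : PrefixMinimal P a)
    (hb : PrefixMinimal P b) (hal : a <+: l) (hbl : b <+: l) : a = b := by
  by_contra hne
  rcases List.prefix_or_prefix_of_prefix hal hbl with hab | hba
  · exact hb.2 a hab hne ha.1
  · exact ha.2 b hba (Ne.symm hne) hb.1

theorem exists_prefixMinimal_prefix {τ : List α} (h : P τ) :
    ∃ τ', τ' <+: τ ∧ PrefixMinimal P τ' := by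
  classical
  have hex : ∃ n, P (τ.take n) := ⟨τ.length, by rwa [List.take_length]⟩
  refine ⟨τ.take (Nat.find hex), List.take_prefix _ _, Nat.find_spec hex,
    fun τ' hτ' hne hP => ?_⟩
  have hlt : τ'.length < Nat.find hex :=
    (lt_of_le_of_ne hτ'.length_le (mt hτ'.eq_of_length hne)).trans_le
      (List.length_take_le _ _)
  have htake : τ.take τ'.length = τ' :=
    (List.prefix_iff_eq_take.mp (hτ'.trans (List.take_prefix _ _))).symm
  exact Nat.find_min hex hlt (by rwa [htake])

end PrefixMinimal

section ImmediateCollapse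

variable {T : Type*} {g : LRApprox.ContextFreeGrammar T}

variable (g) in
def LoopAfter (σ ρ : Stack g) : Prop :=
  ∃ τ υ, σ = ρ ++ τ ++ υ ∧ IsLoop g τ

theorem immediatelyCollapses_iff {σ σ' : Stack g} :
    ImmediatelyCollapses g σ σ' ↔ ∃ ρ τ υ, σ = ρ ++ τ ++ υ ∧ σ' = ρ ++ υ ∧
      PrefixMinimal (IsLoop g) τ ∧ PrefixMinimal (LoopAfter g σ) ρ := by
  refine exists₃_congr fun ρ τ υ => ?_
  simp only [PrefixMinimal, LoopAfter, not_exists, not_and]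
  exact ⟨fun ⟨hσ, hσ', hτ, hfirst⟩ =>
      ⟨hσ, hσ', hτ, ⟨τ, υ, hσ, hτ.1⟩, fun ρ' hρ' hne τ' υ' hσ'' => hfirst ρ' τ' υ' hσ'' hρ' hne⟩,
    fun ⟨hσ, hσ', hτ, _, hfirst⟩ =>
      ⟨hσ, hσ', hτ, fun ρ' τ' υ' hσ'' hρ' hne => hfirst ρ' hρ' hne τ' υ' hσ''⟩⟩

theorem ImmediatelyCollapses.unique {σ σ₁ σ₂ : Stack g} (h₁ : ImmediatelyCollapses g σ σ₁)
    (h₂ : ImmediatelyCollapses g σ σ₂) : σ₁ = σ₂ := by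
  obtain ⟨ρ₁, τ₁, υ₁, hσ₁, rfl, hτ₁, hρ₁⟩ := immediatelyCollapses_iff.mp h₁
  obtain ⟨ρ₂, τ₂, υ₂, hσ₂, rfl, hτ₂, hρ₂⟩ := immediatelyCollapses_iff.mp h₂
  obtain rfl : ρ₁ = ρ₂ := hρ₁.eq_of_prefix (l := σ) hρ₂
    ⟨τ₁ ++ υ₁, by rw [hσ₁, List.append_assoc]⟩ ⟨τ₂ ++ υ₂, by rw [hσ₂, List.append_assoc]⟩
  have hrest : τ₁ ++ υ₁ = τ₂ ++ υ₂ := by simpa using hσ₁.symm.trans hσ₂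
  obtain rfl : τ₁ = τ₂ := hτ₁.eq_of_prefix (l := τ₂ ++ υ₂) hτ₂
    (hrest ▸ List.prefix_append _ _) (List.prefix_append _ _)
  simpa using hrest

theorem Collapsible.exists_immediatelyCollapses {σ : Stack g} (h : Collapsible g σ) :
    ∃ σ', ImmediatelyCollapses g σ σ' := by
  obtain ⟨ρ₀, τ₀, υ₀, hσ₀, hτ₀⟩ := h
  obtain ⟨ρ, -, hρ⟩ := exists_prefixMinimal_prefix (P := LoopAfter g σ) ⟨τ₀, υ₀, hσ₀, hτ₀⟩
  obtain ⟨τ₁, υ₁, hσ₁, hτ₁⟩ := hρ.1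
  obtain ⟨τ, ⟨w, rfl⟩, hτ⟩ := exists_prefixMinimal_prefix hτ₁
  exact ⟨ρ ++ (w ++ υ₁),
    immediatelyCollapses_iff.mpr ⟨ρ, τ, w ++ υ₁, by simp [hσ₁], rfl, hτ, hρ⟩⟩

end ImmediateCollapse

/-- Every collapsible stack `σ` immediately collapses to a
unique stack `C(σ)`. -/
theorem immediate_collapse_unique {T : Type*} (g : LRApprox.ContextFreeGrammar T) :
    ∀ σ : Stack g, Collapsible g σ →
      ∃! σ' : Stack g, ImmediatelyCollapses g σ σ' := by
  intro σ hσ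
  obtain ⟨σ', h'⟩ := Collapsible.exists_immediatelyCollapses hσ
  exact ⟨σ', h', fun _ h'' => ImmediatelyCollapses.unique h'' h'⟩
end

section
/- Every equivalence class of the collapsing equivalence on stacks contains exactly one uncollapsible stack, which is the unique shortest stack in the class; hence each class has a canonical uncollapsible representative. -/
open LRApprox

/-!
Removing the earliest minimal loop is a deterministic step that shortens the stack, so every
stack collapses to a unique uncollapsible normal form. Two stacks are collapsing-equivalent
exactly when they share this normal form, and a stack other than the normal form is strictly
longer than it.
-/

namespace LRApprox

variable {T : Type*} {g : ContextFreeGrammar T}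

theorem IsLoop.ne_nil {τ : Stack g} (h : IsLoop g τ) : τ ≠ [] := by
  rintro rfl
  obtain ⟨p, q, hp, -⟩ := h
  simp at hp

namespace ImmediatelyCollapses

theorem collapsible {σ σ' : Stack g} (h : ImmediatelyCollapses g σ σ') : Collapsible g σ := by
  obtain ⟨ρ, τ, υ, hσ, -, hτ, -⟩ := h
  exact ⟨ρ, τ, υ, hσ, hτ.1⟩

theorem length_lt {σ σ' : Stack g} (h : ImmediatelyCollapses g σ σ') :
    σ'.length < σ.length := by
  obtain ⟨ρ, τ, υ, rfl, rfl, hτ, -⟩ := h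
  have : τ.length ≠ 0 := by simpa using hτ.1.ne_nil
  simp only [List.length_append]
  omega

theorem rightUnique : Relator.RightUnique (ImmediatelyCollapses g) := by
  rintro σ σ₁ σ₂ ⟨ρ₁, τ₁, υ₁, e₁, rfl, m₁, n₁⟩ ⟨ρ₂, τ₂, υ₂, e₂, rfl, m₂, n₂⟩
  obtain rfl : ρ₁ = ρ₂ := by
    rcases List.prefix_or_prefix_of_prefix (⟨τ₁ ++ υ₁, by simp [e₁]⟩ : ρ₁ <+: σ)
        (⟨τ₂ ++ υ₂, by simp [e₂]⟩ : ρ₂ <+: σ) with h | h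
    · by_contra hne; exact n₂ ⟨ρ₁, τ₁, υ₁, e₁, h, hne, m₁.1⟩
    · by_contra hne; exact n₁ ⟨ρ₂, τ₂, υ₂, e₂, h, Ne.symm hne, m₂.1⟩
  have hrest : τ₁ ++ υ₁ = τ₂ ++ υ₂ := by simpa using e₁.symm.trans e₂
  obtain rfl : τ₁ = τ₂ := by
    rcases List.prefix_or_prefix_of_prefix (List.prefix_append τ₁ υ₁)
        (hrest ▸ List.prefix_append τ₂ υ₂) with h | h
    · by_contra hne; exact m₂.2 τ₁ h hne m₁.1
    · by_contra hne; exact m₁.2 τ₂ h (Ne.symm hne) m₂.1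
  rw [List.append_cancel_left hrest]

end ImmediatelyCollapses

theorem Collapsible.exists_immediatelyCollapses {σ : Stack g} (h : Collapsible g σ) :
    ∃ σ', ImmediatelyCollapses g σ σ' := by
  classical
  -- take the earliest position where a loop starts, then the shortest loop starting there
  have hstart : ∃ n, ∃ ρ τ υ : Stack g, σ = ρ ++ τ ++ υ ∧ IsLoop g τ ∧ ρ.length = n :=
    let ⟨ρ, τ, υ, hσ, hτ⟩ := h; ⟨_, ρ, τ, υ, hσ, hτ, rfl⟩
  obtain ⟨ρ, τ₀, υ₀, hσ₀, hτ₀, hρ⟩ := Nat.find_spec hstart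
  have hlen : ∃ m, ∃ τ υ : Stack g, σ = ρ ++ τ ++ υ ∧ IsLoop g τ ∧ τ.length = m :=
    ⟨_, τ₀, υ₀, hσ₀, hτ₀, rfl⟩
  obtain ⟨τ, υ, hσ, hτ, hτlen⟩ := Nat.find_spec hlen
  refine ⟨ρ ++ υ, ρ, τ, υ, hσ, rfl, ⟨hτ, ?_⟩, ?_⟩
  · rintro τ' hpre hne hτ'
    have hlt : τ'.length < τ.length :=
      lt_of_le_of_ne hpre.length_le fun h => hne (hpre.eq_of_length h)
    obtain ⟨rest, rfl⟩ := hpre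
    exact Nat.find_min hlen (hτlen ▸ hlt) ⟨τ', rest ++ υ, by simp [hσ], hτ', rfl⟩
  · rintro ⟨ρ', τ', υ', hσ', hpre, hne, hτ'⟩
    have hlt : ρ'.length < ρ.length :=
      lt_of_le_of_ne hpre.length_le fun h => hne (hpre.eq_of_length h)
    exact Nat.find_min hstart (hρ ▸ hlt) ⟨ρ', τ', υ', hσ', hτ', rfl⟩

theorem exists_collapses_not_collapsible (σ : Stack g) :
    ∃ τ, ¬ Collapsible g τ ∧ Collapses g σ τ := by
  by_cases hσ : Collapsible g σ
  · obtain ⟨σ', hσσ'⟩ := hσ.exists_immediatelyCollapses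
    obtain ⟨τ, hτ, hσ'τ⟩ := exists_collapses_not_collapsible σ'
    exact ⟨τ, hτ, .head hσσ' hσ'τ⟩
  · exact ⟨σ, hσ, .refl⟩
termination_by σ.length
decreasing_by exact hσσ'.length_lt

namespace Collapses

theorem eq_of_not_collapsible {σ τ : Stack g} (h : Collapses g σ τ) (hσ : ¬ Collapsible g σ) :
    σ = τ := by
  rcases h.cases_head with rfl | ⟨σ', hσσ', -⟩
  · rfl
  · exact absurd hσσ'.collapsible hσ

theorem length_lt_of_ne {σ τ : Stack g} (h : Collapses g σ τ) (hne : σ ≠ τ) :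
    τ.length < σ.length := by
  induction h with
  | refl => exact absurd rfl hne
  | @tail υ τ hσυ hυτ ih =>
    by_cases hσυ' : σ = υ
    · exact hσυ' ▸ hυτ.length_lt
    · exact hυτ.length_lt.trans (ih hσυ')

theorem eq_of_collapses {σ τ τ' : Stack g} (h : Collapses g σ τ) (h' : Collapses g σ τ')
    (hτ : ¬ Collapsible g τ) (hτ' : ¬ Collapsible g τ') : τ = τ' := by
  rcases h.total_of_right_unique ImmediatelyCollapses.rightUnique h' with hττ' | hτ'τ
  · exact eq_of_not_collapsible hττ' hτ
  · exact (eq_of_not_collapsible hτ'τ hτ').symm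

end Collapses

theorem CollEquiv.collapses {σ σ' τ : Stack g} (h : CollEquiv g σ σ') (hστ : Collapses g σ τ)
    (hτ : ¬ Collapsible g τ) : Collapses g σ' τ := by
  obtain ⟨υ, hυ, hσυ, hσ'υ⟩ := h
  rwa [hσυ.eq_of_collapses hστ hυ hτ] at hσ'υ

end LRApprox

/-- Every equivalence class of the collapsing equivalence
contains exactly one uncollapsible stack, which is the unique shortest stack
in the class. -/
theorem unique_uncollapsible_representative {T : Type*} (g : LRApprox.ContextFreeGrammar T) :
    ∀ σ : Stack g, ∃ τ : Stack g,
      ¬ Collapsible g τ ∧ CollEquiv g σ τ ∧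
      (∀ τ' : Stack g, ¬ Collapsible g τ' → CollEquiv g σ τ' → τ' = τ) ∧
      (∀ τ' : Stack g, CollEquiv g σ τ' → τ' ≠ τ → τ.length < τ'.length) := by
  intro σ
  obtain ⟨τ, hτ, hστ⟩ := exists_collapses_not_collapsible σ
  refine ⟨τ, hτ, ⟨τ, hτ, hστ, .refl⟩, fun τ' hτ' hστ' => ?_, fun τ' hστ' hne => ?_⟩
  · exact (hστ'.collapses hστ hτ).eq_of_not_collapsible hτ'
  · exact (hστ'.collapses hστ hτ).length_lt_of_ne hne
end
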